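/- Plasmon resonance at an interior point of the continuous spectrum: let g = (g₁, g₂) ∈ W* have continuous components, and for δ > 0 set N(δ) = (1/2)∫_ℝ [ p₁(s)|g₁(s)|²/((λ₀ − η(s))² + δ²) + p₂(s)|g₂(s)|²/((λ₀ + η(s))² + δ²) ] ds (which is the squared W*-norm of the resolvent (λ₀ + iδ − 𝕂*)^{−1}g). If λ₀ ∈ (0, b), then lim_{δ→0⁺} δ·N(δ) = π·p₁(s₀)·(|g₁(s₀)|² + |g₁(−s₀)|²)/(2|η'(s₀)|) with s₀ = σ(λ₀); if λ₀ ∈ (−b, 0), then lim_{δ→0⁺} δ·N(δ) = π·p₂(s₀)·(|g₂(s₀)|² + |g₂(−s₀)|²)/(2|η'(s₀)|) with s₀ = σ(−λ₀). -/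

import Mathlib

open Real Filter Topology Set MeasureTheory

noncomputable def p1 (θ₀ : ℝ) (s : ℝ) : ℝ :=
  if s = 0 then θ₀ * (π - θ₀) / π
  else Real.sinh (s * θ₀) * Real.sinh (s * (π - θ₀)) / (s * Real.sinh (s * π))

noncomputable def p2 (θ₀ : ℝ) (s : ℝ) : ℝ :=
  Real.cosh (s * θ₀) * Real.cosh (s * (π - θ₀)) / (s * Real.sinh (s * π))

noncomputable def eta (θ₀ : ℝ) (s : ℝ) : ℝ :=
  if s = 0 then 1 / 2 - θ₀ / π
  else Real.sinh (s * (π - 2 * θ₀)) / (2 * Real.sinh (s * π))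

noncomputable def mu1 (θ₀ : ℝ) : Measure ℝ :=
  (volume : Measure ℝ).withDensity fun s => ENNReal.ofReal (p1 θ₀ s)

noncomputable def mu2 (θ₀ : ℝ) : Measure ℝ :=
  (volume : Measure ℝ).withDensity fun s => ENNReal.ofReal (p2 θ₀ s)

/-!
With `A = p₁|g₁|²` and `B = p₂|g₂|²`, `2δ N(δ)` is `δ ∫ A/((λ₀ - η)² + δ²)` plus
`δ ∫ B/((λ₀ + η)² + δ²)` (take `λ₀ > 0`; the case `λ₀ < 0` swaps the two components).
Wherever a denominator stays above some `κ² > 0` the corresponding part is `O(δ)`; this covers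
the whole `B`-term, since `η > 0`, and the `A`-term away from the two zeros `±s₀` of `λ₀ - η`.
Near a zero `x₀`, where `η' ≠ 0`, the substitution `x = x₀ + δ t` turns the `A`-term into
`∫ A(x₀ + δt) / ((ψ(x₀ + δt)/δ)² + 1) dt` with `ψ = λ₀ - η`; by dominated convergence (the
integrand is at most `C / (1 + m² t²)` as long as `|ψ x| ≥ m |x - x₀|`) this tends to
`∫ A(x₀) / (1 + η'(s₀)² t²) dt = π A(x₀) / |η'(s₀)|`.
-/

theorem integral_inv_one_add_mul_sq (D : ℝ) :
    ∫ t, (1 + (D * t) ^ 2)⁻¹ = π / |D| := by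
  rw [Measure.integral_comp_mul_left (fun t => (1 + t ^ 2)⁻¹) D, integral_univ_inv_one_add_sq,
    smul_eq_mul, abs_inv, inv_mul_eq_div]

theorem mul_integral_eq_integral_comp_add_mul (f : ℝ → ℝ) (x₀ : ℝ) {δ : ℝ} (hδ : 0 < δ) :
    δ * ∫ x, f x = ∫ t, δ ^ 2 * f (x₀ + δ * t) := by
  rw [integral_const_mul, Measure.integral_comp_mul_left (fun t => f (x₀ + t)),
    integral_add_left_eq_self, smul_eq_mul, abs_of_pos (inv_pos.2 hδ)]
  field_simp

section Lorentz

variable {F ψ : ℝ → ℝ} {S : Set ℝ} {x₀ D m C : ℝ}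

theorem tendsto_sq_mul_indicator_div_sq_add_sq (hS : S ∈ 𝓝 x₀) (hFc : ContinuousAt F x₀)
    (hψ : HasDerivAt ψ D x₀) (hψ0 : ψ x₀ = 0) (t : ℝ) :
    Tendsto (fun δ => δ ^ 2 * S.indicator (fun x => F x / (ψ x ^ 2 + δ ^ 2)) (x₀ + δ * t))
      (𝓝[>] 0) (𝓝 (F x₀ * (1 + (D * t) ^ 2)⁻¹)) := by
  have hline : Tendsto (fun δ : ℝ => x₀ + δ * t) (𝓝[>] 0) (𝓝 x₀) :=
    ((by fun_prop : Continuous fun δ : ℝ => x₀ + δ * t).tendsto' 0 x₀ (by simp)).mono_left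
      nhdsWithin_le_nhds
  have hslope : Tendsto (fun δ => δ⁻¹ * ψ (x₀ + δ * t)) (𝓝[>] 0) (𝓝 (D * t)) := by
    have hcomp : HasDerivAt (fun δ => ψ (x₀ + δ * t)) (D * t) 0 := by
      have hline' : HasDerivAt (fun δ : ℝ => x₀ + δ * t) t 0 := by
        simpa using ((hasDerivAt_id (0 : ℝ)).mul_const t).const_add x₀
      exact (show HasDerivAt ψ D (x₀ + 0 * t) by simpa using hψ).comp 0 hline'
    simpa [hψ0] using hcomp.tendsto_slope_zero_right
  refine ((hFc.tendsto.comp hline).mul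
    (((hslope.pow 2).const_add 1).inv₀ (by positivity))).congr' ?_
  filter_upwards [hline.eventually_mem hS, eventually_mem_nhdsWithin] with δ hδS hδ
  rw [indicator_of_mem hδS]
  simp only [Function.comp_apply]
  have : δ ≠ 0 := hδ.ne'
  field_simp
  ring

theorem norm_sq_mul_indicator_div_sq_add_sq_le (hx₀ : x₀ ∈ S) (hFS : ∀ x ∈ S, ‖F x‖ ≤ C)
    (hψS : ∀ x ∈ S, m * |x - x₀| ≤ |ψ x|) (hm : 0 ≤ m) {δ : ℝ} (hδ : 0 < δ) (t : ℝ) :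
    ‖δ ^ 2 * S.indicator (fun x => F x / (ψ x ^ 2 + δ ^ 2)) (x₀ + δ * t)‖
      ≤ C * (1 + (m * t) ^ 2)⁻¹ := by
  have hC : 0 ≤ C := (norm_nonneg _).trans (hFS x₀ hx₀)
  by_cases hmem : x₀ + δ * t ∈ S
  · have hlow : δ ^ 2 * (m * t) ^ 2 ≤ ψ (x₀ + δ * t) ^ 2 := by
      have := hψS _ hmem
      rw [add_sub_cancel_left, abs_mul, abs_of_pos hδ] at this
      calc δ ^ 2 * (m * t) ^ 2 = (m * (δ * |t|)) ^ 2 := by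
            rw [mul_pow, mul_pow, mul_pow, sq_abs]; ring
        _ ≤ |ψ (x₀ + δ * t)| ^ 2 := by gcongr
        _ = ψ (x₀ + δ * t) ^ 2 := sq_abs _
    rw [indicator_of_mem hmem, norm_mul, norm_div, Real.norm_of_nonneg (sq_nonneg δ),
      Real.norm_of_nonneg (by positivity : 0 ≤ ψ (x₀ + δ * t) ^ 2 + δ ^ 2)]
    calc δ ^ 2 * (‖F (x₀ + δ * t)‖ / (ψ (x₀ + δ * t) ^ 2 + δ ^ 2))
        ≤ δ ^ 2 * (C / (δ ^ 2 * (1 + (m * t) ^ 2))) := by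
          gcongr
          · exact hFS _ hmem
          · linarith
      _ = C * (1 + (m * t) ^ 2)⁻¹ := by field_simp
  · rw [indicator_of_notMem hmem, mul_zero, norm_zero]
    positivity

theorem tendsto_mul_setIntegral_div_sq_add_sq (hS : S ∈ 𝓝 x₀) (hSm : MeasurableSet S)
    (hFm : Measurable F) (hψm : Measurable ψ) (hFc : ContinuousAt F x₀)
    (hFS : ∀ x ∈ S, ‖F x‖ ≤ C) (hψ : HasDerivAt ψ D x₀) (hψ0 : ψ x₀ = 0) (hm : 0 < m)
    (hψS : ∀ x ∈ S, m * |x - x₀| ≤ |ψ x|) :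
    Tendsto (fun δ => δ * ∫ x in S, F x / (ψ x ^ 2 + δ ^ 2)) (𝓝[>] 0)
      (𝓝 (π * F x₀ / |D|)) := by
  have hlimit : ∫ t, F x₀ * (1 + (D * t) ^ 2)⁻¹ = π * F x₀ / |D| := by
    rw [integral_const_mul, integral_inv_one_add_mul_sq]
    ring
  have hrescale : ∀ᶠ δ in 𝓝[>] (0 : ℝ),
      ∫ t, δ ^ 2 * S.indicator (fun x => F x / (ψ x ^ 2 + δ ^ 2)) (x₀ + δ * t)
        = δ * ∫ x in S, F x / (ψ x ^ 2 + δ ^ 2) := by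
    filter_upwards [eventually_mem_nhdsWithin] with δ hδ
    rw [← integral_indicator hSm]
    exact (mul_integral_eq_integral_comp_add_mul _ x₀ hδ).symm
  rw [← hlimit]
  refine (tendsto_integral_filter_of_dominated_convergence (fun t => C * (1 + (m * t) ^ 2)⁻¹)
    ?_ ?_ ?_ (ae_of_all _ (tendsto_sq_mul_indicator_div_sq_add_sq hS hFc hψ hψ0))).congr' hrescale
  · refine Eventually.of_forall fun δ => ?_
    have : Measurable (S.indicator fun x => F x / (ψ x ^ 2 + δ ^ 2)) :=
      (hFm.div ((hψm.pow_const 2).add_const _)).indicator hSm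
    exact ((this.comp (by fun_prop)).const_mul _).aestronglyMeasurable
  · filter_upwards [eventually_mem_nhdsWithin] with δ hδ
    exact ae_of_all _ (norm_sq_mul_indicator_div_sq_add_sq_le (mem_of_mem_nhds hS) hFS hψS
      hm.le hδ)
  · exact (integrable_inv_one_add_sq.comp_mul_left' hm.ne').const_mul C

end Lorentz

section Measure

variable {α : Type*} [MeasurableSpace α] {μ : Measure α}

theorem tendsto_mul_integral_div_sq_add_sq_zero {A φ : α → ℝ} {κ : ℝ} (hA : Integrable A μ)
    (hκ : 0 < κ) (hφ : ∀ᵐ x ∂μ, κ ≤ |φ x|) :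
    Tendsto (fun δ => δ * ∫ x, A x / (φ x ^ 2 + δ ^ 2) ∂μ) (𝓝 0) (𝓝 0) := by
  have hbound : ∀ δ, ‖δ * ∫ x, A x / (φ x ^ 2 + δ ^ 2) ∂μ‖ ≤ |δ| * ∫ x, ‖A x‖ / κ ^ 2 ∂μ := by
    intro δ
    rw [norm_mul, Real.norm_eq_abs]
    gcongr
    refine norm_integral_le_of_norm_le (hA.norm.div_const _) ?_
    filter_upwards [hφ] with x hx
    rw [norm_div, Real.norm_of_nonneg (by positivity : 0 ≤ φ x ^ 2 + δ ^ 2)]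
    gcongr
    rw [← sq_abs (φ x)]
    nlinarith [sq_nonneg δ]
  refine squeeze_zero_norm hbound ?_
  exact (by fun_prop : Continuous fun δ : ℝ => |δ| * ∫ x, ‖A x‖ / κ ^ 2 ∂μ).tendsto' 0 0 (by simp)

theorem integrable_div_sq_add_sq {A φ : α → ℝ}
    (hA : Integrable A μ) (hφ : AEMeasurable φ μ) {δ : ℝ} (hδ : δ ≠ 0) :
    Integrable (fun x => A x / (φ x ^ 2 + δ ^ 2)) μ := by
  refine hA.mul_bdd (c := (δ ^ 2)⁻¹) ((hφ.pow_const 2).add_const _).inv.aestronglyMeasurable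
    (ae_of_all _ fun x => ?_)
  rw [norm_inv, Real.norm_of_nonneg (by positivity)]
  gcongr
  nlinarith [sq_nonneg (φ x)]

theorem integral_eq_setIntegral_add_setIntegral_add_compl {E : Type*} [NormedAddCommGroup E]
    [NormedSpace ℝ E] {f : α → E} {P Q : Set α}
    (hP : MeasurableSet P) (hQ : MeasurableSet Q) (hPQ : Disjoint P Q) (hf : Integrable f μ) :
    ∫ x, f x ∂μ = ∫ x in P, f x ∂μ + ∫ x in Q, f x ∂μ + ∫ x in (P ∪ Q)ᶜ, f x ∂μ := by
  rw [← setIntegral_union hPQ hQ hf.integrableOn hf.integrableOn,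
    integral_add_compl (hP.union hQ) hf]

end Measure

theorem mul_abs_sub_le_abs_sub_of_deriv_le {f f' : ℝ → ℝ} {s : Set ℝ} (hs : Convex ℝ s)
    {m : ℝ} (hf : ∀ x ∈ s, HasDerivAt f (f' x) x) (hf' : ∀ x ∈ s, f' x ≤ -m) {x y : ℝ}
    (hx : x ∈ s) (hy : y ∈ s) : m * |x - y| ≤ |f x - f y| := by
  wlog hxy : x ≤ y generalizing x y
  · rw [abs_sub_comm x, abs_sub_comm (f x)]
    exact this hy hx (le_of_not_ge hxy)
  have := hs.image_sub_le_mul_sub_of_deriv_le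
    (fun z hz => (hf z hz).continuousAt.continuousWithinAt)
    (fun z hz => (hf z (interior_subset hz)).differentiableAt.differentiableWithinAt)
    (fun z hz => (hf z (interior_subset hz)).deriv ▸ hf' z (interior_subset hz)) x hx y hy hxy
  rw [abs_of_nonpos (sub_nonpos.2 hxy)]
  linarith [le_abs_self (f x - f y)]

theorem integrable_mul_norm_sq_of_memLp_withDensity {p : ℝ → ℝ} (hp : Measurable p)
    (hp0 : ∀ s, 0 ≤ p s) {g : ℝ → ℂ}
    (hg : MemLp g 2 ((volume : Measure ℝ).withDensity fun s => ENNReal.ofReal (p s))) :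
    Integrable (fun s => p s * ‖g s‖ ^ 2) := by
  have := hg.integrable_norm_rpow two_ne_zero ENNReal.ofNat_ne_top
  rw [integrable_withDensity_iff (by fun_prop) (ae_of_all _ fun s => ENNReal.ofReal_lt_top)]
    at this
  refine this.congr (ae_of_all _ fun s => ?_)
  simp only [ENNReal.toReal_ofReal (hp0 s), ENNReal.toReal_ofNat, rpow_two]
  ring

theorem mul_sinh_mul_pos {s c : ℝ} (hs : s ≠ 0) (hc : 0 < c) : 0 < s * sinh (s * c) := by
  rcases hs.lt_or_gt with h | h
  · exact mul_pos_of_neg_of_neg h (sinh_neg_iff.2 (mul_neg_of_neg_of_pos h hc))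
  · exact mul_pos h (sinh_pos_iff.2 (mul_pos h hc))

theorem sinh_mul_ne_zero {s c : ℝ} (hs : s ≠ 0) (hc : 0 < c) : sinh (s * c) ≠ 0 :=
  right_ne_zero_of_mul (mul_sinh_mul_pos hs hc).ne'

theorem hasDerivAt_sinh_mul (c x : ℝ) :
    HasDerivAt (fun s => sinh (s * c)) (cosh (x * c) * c) x := by
  simpa using ((hasDerivAt_id x).mul_const c).sinh

theorem hasDerivAt_cosh_mul (c x : ℝ) :
    HasDerivAt (fun s => cosh (s * c)) (sinh (x * c) * c) x := by
  simpa using ((hasDerivAt_id x).mul_const c).cosh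

-- Equivalently, `tanh x / x` is strictly decreasing on `(0, ∞)`.
theorem mul_cosh_mul_sinh_lt {a b s : ℝ} (ha : 0 < a) (hab : a < b) (hs : 0 < s) :
    a * cosh (s * a) * sinh (s * b) < b * sinh (s * a) * cosh (s * b) := by
  let h x := b * sinh (x * a) * cosh (x * b) - a * cosh (x * a) * sinh (x * b)
  have hderiv : ∀ x, HasDerivAt h ((b ^ 2 - a ^ 2) * (sinh (x * a) * sinh (x * b))) x := by
    intro x
    refine ((((hasDerivAt_sinh_mul a x).const_mul b).mul (hasDerivAt_cosh_mul b x)).sub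
      (((hasDerivAt_cosh_mul a x).const_mul a).mul (hasDerivAt_sinh_mul b x))).congr_deriv ?_
    ring
  have hmono : StrictMonoOn h (Ici 0) := by
    refine strictMonoOn_of_deriv_pos (convex_Ici 0)
      (fun x _ => (hderiv x).continuousAt.continuousWithinAt) fun x hx => ?_
    rw [interior_Ici, mem_Ioi] at hx
    rw [(hderiv x).deriv]
    have : 0 < b ^ 2 - a ^ 2 := by nlinarith
    have := sinh_pos_iff.2 (mul_pos hx ha)
    have := sinh_pos_iff.2 (mul_pos hx (ha.trans hab))
    positivity
  have := hmono (mem_Ici.2 le_rfl) hs.le hs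
  simp only [h, zero_mul, sinh_zero, mul_zero, zero_mul, sub_zero] at this
  linarith

section Weights

variable {θ₀ : ℝ}

theorem p1_nonneg (h0 : 0 < θ₀) (h1 : θ₀ < π) (s : ℝ) : 0 ≤ p1 θ₀ s := by
  unfold p1
  split_ifs with hs
  · have : 0 < π - θ₀ := by linarith
    positivity
  · have hθ := mul_sinh_mul_pos hs h0
    have hπθ := mul_sinh_mul_pos hs (by linarith : 0 < π - θ₀)
    have hπ := mul_sinh_mul_pos hs pi_pos
    have : sinh (s * θ₀) * sinh (s * (π - θ₀)) / (s * sinh (s * π))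
        = s * sinh (s * θ₀) * (s * sinh (s * (π - θ₀))) / (s ^ 2 * (s * sinh (s * π))) := by
      field_simp
    rw [this]
    exact (div_pos (mul_pos hθ hπθ) (mul_pos (by positivity) hπ)).le

theorem p2_nonneg (s : ℝ) : 0 ≤ p2 θ₀ s := by
  unfold p2
  rcases eq_or_ne s 0 with rfl | hs
  · simp
  · exact div_nonneg (by positivity) (mul_sinh_mul_pos hs pi_pos).le

theorem p1_neg (s : ℝ) : p1 θ₀ (-s) = p1 θ₀ s := by
  unfold p1
  rcases eq_or_ne s 0 with rfl | hs
  · simp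
  · rw [if_neg (neg_ne_zero.2 hs), if_neg hs]
    simp only [neg_mul, sinh_neg]
    ring

theorem p2_neg (s : ℝ) : p2 θ₀ (-s) = p2 θ₀ s := by
  unfold p2
  simp only [neg_mul, sinh_neg, cosh_neg]
  ring

theorem continuousAt_p1 {s : ℝ} (hs : s ≠ 0) : ContinuousAt (p1 θ₀) s := by
  have := (mul_sinh_mul_pos hs pi_pos).ne'
  refine ContinuousAt.congr (f := fun s => sinh (s * θ₀) * sinh (s * (π - θ₀)) / (s * sinh (s * π)))
    (by fun_prop (disch := assumption)) ?_
  filter_upwards [isOpen_ne.mem_nhds hs] with x hx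
  exact (if_neg hx).symm

theorem continuousAt_p2 {s : ℝ} (hs : s ≠ 0) : ContinuousAt (p2 θ₀) s := by
  have := (mul_sinh_mul_pos hs pi_pos).ne'
  unfold p2
  fun_prop (disch := assumption)

theorem measurable_p1 : Measurable (p1 θ₀) :=
  Measurable.ite (measurableSet_eq) measurable_const (by fun_prop)

theorem measurable_p2 : Measurable (p2 θ₀) := by
  unfold p2
  fun_prop

end Weights

section Eta

variable {θ₀ : ℝ}

theorem eta_zero : eta θ₀ 0 = 1 / 2 - θ₀ / π := if_pos rfl

theorem eta_neg (s : ℝ) : eta θ₀ (-s) = eta θ₀ s := by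
  unfold eta
  rcases eq_or_ne s 0 with rfl | hs
  · simp
  · rw [if_neg (neg_ne_zero.2 hs), if_neg hs, neg_mul, sinh_neg, neg_mul, sinh_neg, mul_neg,
      neg_div_neg_eq]

theorem eta_abs (s : ℝ) : eta θ₀ |s| = eta θ₀ s := by
  rcases le_total 0 s with h | h
  · rw [abs_of_nonneg h]
  · rw [abs_of_nonpos h, eta_neg]

theorem eta_pos (h1 : θ₀ < π / 2) (s : ℝ) : 0 < eta θ₀ s := by
  unfold eta
  split_ifs with hs
  · rw [sub_pos, div_lt_iff₀ pi_pos]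
    linarith
  · have hnum := mul_sinh_mul_pos hs (by linarith : 0 < π - 2 * θ₀)
    have hden := mul_sinh_mul_pos hs pi_pos
    rw [← mul_div_mul_left _ _ hs, mul_left_comm]
    exact div_pos hnum (mul_pos two_pos hden)

theorem measurable_eta : Measurable (eta θ₀) :=
  Measurable.ite (measurableSet_eq) measurable_const (by fun_prop)

noncomputable def etaDeriv (θ₀ s : ℝ) : ℝ :=
  ((π - 2 * θ₀) * cosh (s * (π - 2 * θ₀)) * sinh (s * π)
    - π * sinh (s * (π - 2 * θ₀)) * cosh (s * π)) / (2 * sinh (s * π) ^ 2)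

theorem hasDerivAt_eta {s : ℝ} (hs : s ≠ 0) : HasDerivAt (eta θ₀) (etaDeriv θ₀ s) s := by
  have hsinh := sinh_mul_ne_zero hs pi_pos
  have hquot := (hasDerivAt_sinh_mul (π - 2 * θ₀) s).div
    ((hasDerivAt_sinh_mul π s).const_mul 2) (mul_ne_zero two_ne_zero hsinh)
  refine (hquot.congr_deriv ?_).congr_of_eventuallyEq ?_
  · unfold etaDeriv
    field_simp
  · filter_upwards [isOpen_ne.mem_nhds hs] with x hx
    exact if_neg hx

theorem etaDeriv_neg (s : ℝ) : etaDeriv θ₀ (-s) = -etaDeriv θ₀ s := by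
  simp only [etaDeriv, neg_mul, sinh_neg, cosh_neg]
  ring

theorem continuousAt_etaDeriv {s : ℝ} (hs : s ≠ 0) : ContinuousAt (etaDeriv θ₀) s := by
  have := pow_ne_zero 2 (sinh_mul_ne_zero hs pi_pos)
  unfold etaDeriv
  fun_prop (disch := positivity)

theorem etaDeriv_lt_zero (h0 : 0 < θ₀) (h1 : θ₀ < π / 2) {s : ℝ} (hs : 0 < s) :
    etaDeriv θ₀ s < 0 := by
  have := mul_cosh_mul_sinh_lt (b := π) (by linarith : 0 < π - 2 * θ₀) (by linarith) hs
  unfold etaDeriv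
  exact div_neg_of_neg_of_pos (by linarith) (by positivity [sinh_mul_ne_zero hs.ne' pi_pos])

theorem eta_strictAntiOn (h0 : 0 < θ₀) (h1 : θ₀ < π / 2) : StrictAntiOn (eta θ₀) (Ioi 0) :=
  strictAntiOn_of_deriv_neg (convex_Ioi 0)
    (fun x hx => (hasDerivAt_eta (ne_of_gt hx)).continuousAt.continuousWithinAt)
    fun x hx => by
      rw [interior_Ioi] at hx
      rw [(hasDerivAt_eta (ne_of_gt hx)).deriv]
      exact etaDeriv_lt_zero h0 h1 hx

end Eta

section Resonance

variable {θ₀ : ℝ}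

theorem exists_mul_abs_sub_le_abs_eta_sub (h0 : 0 < θ₀) (h1 : θ₀ < π / 2) {c d s₀ : ℝ}
    (hc : 0 < c) (hs₀ : s₀ ∈ Icc c d) :
    ∃ m > 0, ∀ x ∈ Icc c d, m * |x - s₀| ≤ |eta θ₀ s₀ - eta θ₀ x| := by
  have hne : ∀ x ∈ Icc c d, x ≠ 0 := fun x hx => (hc.trans_le hx.1).ne'
  obtain ⟨x₁, hx₁, hmax⟩ := isCompact_Icc.exists_isMaxOn ⟨s₀, hs₀⟩
    fun x hx => (continuousAt_etaDeriv (hne x hx)).continuousWithinAt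
  refine ⟨-etaDeriv θ₀ x₁, neg_pos.2 (etaDeriv_lt_zero h0 h1 (hc.trans_le hx₁.1)),
    fun x hx => ?_⟩
  rw [abs_sub_comm (eta θ₀ s₀)]
  exact mul_abs_sub_le_abs_sub_of_deriv_le (convex_Icc c d)
    (fun y hy => hasDerivAt_eta (hne y hy)) (fun y hy => (neg_neg (etaDeriv θ₀ x₁)).symm ▸ hmax hy)
    hx hs₀

theorem exists_pos_ae_le_abs_eta_sub (h0 : 0 < θ₀) (h1 : θ₀ < π / 2) {c d s₀ : ℝ} (hc : 0 < c)
    (hcs : c < s₀) (hsd : s₀ < d) :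
    ∃ κ > 0, ∀ᵐ x ∂(volume.restrict (Icc c d ∪ Icc (-d) (-c))ᶜ),
      κ ≤ |eta θ₀ s₀ - eta θ₀ x| := by
  have hanti := eta_strictAntiOn h0 h1
  refine ⟨min (eta θ₀ c - eta θ₀ s₀) (eta θ₀ s₀ - eta θ₀ d),
    lt_min (sub_pos.2 (hanti (mem_Ioi.2 hc) (mem_Ioi.2 (hc.trans hcs)) hcs))
      (sub_pos.2 (hanti (mem_Ioi.2 (hc.trans hcs)) (mem_Ioi.2 (by linarith)) hsd)), ?_⟩
  -- Discarding the null set `{0}` spares us comparing `η 0` with `η c`.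
  filter_upwards [ae_restrict_mem (measurableSet_Icc.union measurableSet_Icc).compl,
    ae_restrict_of_ae (volume.ae_ne 0)] with x hx hx0
  have habs : |x| < c ∨ d < |x| := by
    by_contra! h
    rcases le_total 0 x with hx' | hx'
    · rw [abs_of_nonneg hx'] at h
      exact hx (Or.inl h)
    · rw [abs_of_nonpos hx'] at h
      exact hx (Or.inr ⟨by linarith, by linarith⟩)
  have hxpos : (0 : ℝ) < |x| := abs_pos.2 hx0
  rw [← eta_abs x]
  rcases habs with h | h
  · linarith [min_le_left (eta θ₀ c - eta θ₀ s₀) (eta θ₀ s₀ - eta θ₀ d),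
      neg_abs_le (eta θ₀ s₀ - eta θ₀ |x|), hanti (mem_Ioi.2 hxpos) (mem_Ioi.2 hc) h]
  · linarith [min_le_right (eta θ₀ c - eta θ₀ s₀) (eta θ₀ s₀ - eta θ₀ d),
      le_abs_self (eta θ₀ s₀ - eta θ₀ |x|),
      hanti (mem_Ioi.2 (hc.trans (hcs.trans hsd))) (mem_Ioi.2 hxpos) h]

theorem tendsto_mul_integral_div_sq_sub_eta_sq (h0 : 0 < θ₀) (h1 : θ₀ < π / 2)
    {lam s₀ : ℝ} (hs₀ : 0 < s₀) (hlam : eta θ₀ s₀ = lam) {A : ℝ → ℝ} (hAm : Measurable A)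
    (hA : Integrable A) (hAc : ∀ s ≠ 0, ContinuousAt A s) :
    Tendsto (fun δ => δ * ∫ s, A s / ((lam - eta θ₀ s) ^ 2 + δ ^ 2)) (𝓝[>] 0)
      (𝓝 (π * (A s₀ + A (-s₀)) / |etaDeriv θ₀ s₀|)) := by
  subst hlam
  set c := s₀ / 2 with hc_def
  set d := 2 * s₀ with hd_def
  have hc : 0 < c := by positivity
  have hcs : c < s₀ := by linarith
  have hsd : s₀ < d := by linarith
  have hP0 : ∀ x ∈ Icc c d, x ≠ 0 := fun x hx => (hc.trans_le hx.1).ne'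
  have hQ0 : ∀ x ∈ Icc (-d) (-c), x ≠ 0 := fun x hx => (hx.2.trans_lt (neg_neg_of_pos hc)).ne
  obtain ⟨m, hm, hlowP⟩ :=
    exists_mul_abs_sub_le_abs_eta_sub h0 h1 hc ⟨hcs.le, hsd.le⟩
  have hlowQ : ∀ x ∈ Icc (-d) (-c), m * |x - -s₀| ≤ |eta θ₀ s₀ - eta θ₀ x| := fun x hx => by
    rw [show x - -s₀ = -(-x - s₀) by ring, abs_neg, ← eta_neg x]
    exact hlowP (-x) ⟨by linarith [hx.2], by linarith [hx.1]⟩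
  obtain ⟨CP, hCP⟩ := isCompact_Icc.exists_bound_of_continuousOn
    fun x hx => (hAc x (hP0 x hx)).continuousWithinAt
  obtain ⟨CQ, hCQ⟩ := isCompact_Icc.exists_bound_of_continuousOn
    fun x hx => (hAc x (hQ0 x hx)).continuousWithinAt
  have hψm : Measurable fun s => eta θ₀ s₀ - eta θ₀ s := measurable_const.sub measurable_eta
  have hlimP := tendsto_mul_setIntegral_div_sq_add_sq (Icc_mem_nhds (by linarith) (by linarith))
    measurableSet_Icc hAm hψm (hAc s₀ hs₀.ne') hCP
    ((hasDerivAt_eta hs₀.ne').const_sub _) (sub_self _) hm hlowP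
  have hlimQ := tendsto_mul_setIntegral_div_sq_add_sq (Icc_mem_nhds (by linarith) (by linarith))
    measurableSet_Icc hAm hψm (hAc (-s₀) (neg_ne_zero.2 hs₀.ne')) hCQ
    ((hasDerivAt_eta (neg_ne_zero.2 hs₀.ne')).const_sub _) (by simp [eta_neg]) hm hlowQ
  obtain ⟨κ, hκ, hlowR⟩ := exists_pos_ae_le_abs_eta_sub h0 h1 hc hcs hsd
  have hlimR := (tendsto_mul_integral_div_sq_add_sq_zero hA.integrableOn hκ hlowR).mono_left
    (nhdsWithin_le_nhds (s := Ioi 0))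
  rw [show π * (A s₀ + A (-s₀)) / |etaDeriv θ₀ s₀|
      = π * A s₀ / |-etaDeriv θ₀ s₀| + π * A (-s₀) / |-etaDeriv θ₀ (-s₀)| + 0 by
    rw [etaDeriv_neg, neg_neg, abs_neg]; ring]
  refine ((hlimP.add hlimQ).add hlimR).congr' ?_
  filter_upwards [self_mem_nhdsWithin] with δ hδ
  have hdisj : Disjoint (Icc c d) (Icc (-d) (-c)) :=
    disjoint_left.2 fun x hP hQ => by linarith [hP.1, hQ.2]
  rw [integral_eq_setIntegral_add_setIntegral_add_compl measurableSet_Icc measurableSet_Icc hdisj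
    (integrable_div_sq_add_sq hA hψm.aemeasurable hδ.ne')]
  ring

theorem tendsto_mul_half_integral_resolvent (h0 : 0 < θ₀) (h1 : θ₀ < π / 2)
    {lam s₀ : ℝ} (hlam : 0 < lam) (hlamb : lam < 1 / 2 - θ₀ / π) (hs₀ : 0 ≤ s₀)
    (hηs₀ : eta θ₀ s₀ = lam) {p q : ℝ → ℝ} {g h : ℝ → ℂ} (hpm : Measurable p)
    (hpc : ∀ s ≠ 0, ContinuousAt p s) (hp_neg : ∀ s, p (-s) = p s) (hgc : Continuous g)
    (hpg : Integrable fun s => p s * ‖g s‖ ^ 2) (hqh : Integrable fun s => q s * ‖h s‖ ^ 2) :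
    Tendsto (fun δ => δ * ((1 / 2) * ∫ s,
        (p s * ‖g s‖ ^ 2 / ((lam - eta θ₀ s) ^ 2 + δ ^ 2)
          + q s * ‖h s‖ ^ 2 / ((lam + eta θ₀ s) ^ 2 + δ ^ 2)))) (𝓝[>] 0)
      (𝓝 (π * p s₀ * (‖g s₀‖ ^ 2 + ‖g (-s₀)‖ ^ 2) / (2 * |deriv (eta θ₀) s₀|))) := by
  have hs₀' : 0 < s₀ := hs₀.lt_of_ne (by rintro rfl; rw [eta_zero] at hηs₀; linarith)
  have hres := tendsto_mul_integral_div_sq_sub_eta_sq h0 h1 hs₀' hηs₀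
    (A := fun s => p s * ‖g s‖ ^ 2) (hpm.mul (hgc.norm.pow 2).measurable) hpg
    fun s hs => (hpc s hs).mul (hgc.norm.pow 2).continuousAt
  have hnonres := (tendsto_mul_integral_div_sq_add_sq_zero hqh hlam (φ := fun s => lam + eta θ₀ s)
    (ae_of_all _ fun s => by linarith [eta_pos h1 s, le_abs_self (lam + eta θ₀ s)])).mono_left
    (nhdsWithin_le_nhds (s := Ioi 0))
  rw [(hasDerivAt_eta hs₀'.ne').deriv, show π * p s₀ * (‖g s₀‖ ^ 2 + ‖g (-s₀)‖ ^ 2)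
      / (2 * |etaDeriv θ₀ s₀|) = (1 / 2) * (π * (p s₀ * ‖g s₀‖ ^ 2 + p (-s₀) * ‖g (-s₀)‖ ^ 2)
        / |etaDeriv θ₀ s₀| + 0) by rw [hp_neg]; ring]
  refine ((hres.add hnonres).const_mul (1 / 2)).congr' ?_
  filter_upwards [self_mem_nhdsWithin] with δ hδ
  have hsub : Measurable fun s => lam - eta θ₀ s := measurable_const.sub measurable_eta
  have hadd : Measurable fun s => lam + eta θ₀ s := measurable_const.add measurable_eta
  rw [integral_add (integrable_div_sq_add_sq hpg hsub.aemeasurable hδ.ne')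
    (integrable_div_sq_add_sq hqh hadd.aemeasurable hδ.ne')]
  ring

end Resonance

/-- plasmon resonance at an interior point of the continuous spectrum:
for `g = (g₁,g₂) ∈ W*` with continuous components and
`N(δ) = (1/2)∫ [p₁|g₁|²/((lam0−η)²+δ²) + p₂|g₂|²/((lam0+η)²+δ²)]`, one has:
if `lam0 ∈ (0,b)` then `δ·N(δ) → π p₁(s₀)(|g₁(s₀)|²+|g₁(−s₀)|²)/(2|η'(s₀)|)` with
`s₀ = σ(lam0)`; if `lam0 ∈ (−b,0)` then `δ·N(δ) → π p₂(s₀)(|g₂(s₀)|²+|g₂(−s₀)|²)/(2|η'(s₀)|)`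
with `s₀ = σ(−lam0)`. Here `σ` inverts `η|_{[0,∞)}` and `b = 1/2 − θ₀/π`. -/
theorem statement15 (θ₀ : ℝ) (h0 : 0 < θ₀) (h1 : θ₀ < π / 2) (σ : ℝ → ℝ)
    (hσ : ∀ t : ℝ, 0 < t → t ≤ 1 / 2 - θ₀ / π → 0 ≤ σ t ∧ eta θ₀ (σ t) = t)
    (g₁ g₂ : ℝ → ℂ) (hg₁c : Continuous g₁) (hg₂c : Continuous g₂)
    (hg₁ : MemLp g₁ 2 (mu1 θ₀)) (hg₂ : MemLp g₂ 2 (mu2 θ₀))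
    (lam0 : ℝ) (N : ℝ → ℝ)
    (hN : ∀ δ : ℝ, N δ =
      (1 / 2) * ∫ s,
        (p1 θ₀ s * ‖g₁ s‖ ^ 2 / ((lam0 - eta θ₀ s) ^ 2 + δ ^ 2)
          + p2 θ₀ s * ‖g₂ s‖ ^ 2 / ((lam0 + eta θ₀ s) ^ 2 + δ ^ 2))) :
    (0 < lam0 → lam0 < 1 / 2 - θ₀ / π →
      Tendsto (fun δ : ℝ => δ * N δ) (𝓝[>] 0)
        (𝓝 (π * p1 θ₀ (σ lam0) * (‖g₁ (σ lam0)‖ ^ 2 + ‖g₁ (-(σ lam0))‖ ^ 2)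
            / (2 * |deriv (eta θ₀) (σ lam0)|)))) ∧
    (-(1 / 2 - θ₀ / π) < lam0 → lam0 < 0 →
      Tendsto (fun δ : ℝ => δ * N δ) (𝓝[>] 0)
        (𝓝 (π * p2 θ₀ (σ (-lam0)) * (‖g₂ (σ (-lam0))‖ ^ 2 + ‖g₂ (-(σ (-lam0)))‖ ^ 2)
            / (2 * |deriv (eta θ₀) (σ (-lam0))|)))) := by
  have hpg₁ := integrable_mul_norm_sq_of_memLp_withDensity measurable_p1
    (p1_nonneg h0 (by linarith)) hg₁
  have hpg₂ := integrable_mul_norm_sq_of_memLp_withDensity measurable_p2 p2_nonneg hg₂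
  refine ⟨fun hpos hlt => ?_, fun hlt hneg => ?_⟩
  · obtain ⟨hσ0, hησ⟩ := hσ lam0 hpos hlt.le
    simpa only [hN] using tendsto_mul_half_integral_resolvent h0 h1 hpos hlt hσ0 hησ
      measurable_p1 (fun s => continuousAt_p1) p1_neg hg₁c hpg₁ hpg₂
  · obtain ⟨hσ0, hησ⟩ := hσ (-lam0) (by linarith) (by linarith)
    refine (tendsto_mul_half_integral_resolvent h0 h1 (neg_pos.2 hneg) (by linarith) hσ0 hησ
      measurable_p2 (fun s => continuousAt_p2) p2_neg hg₂c hpg₂ hpg₁).congr fun δ => ?_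
    rw [hN]
    congr 3
    ext s
    ring
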